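/- If Z(t) = e^{−(I−C)t}Z₀ with coupling matrix C = C(A) depending on A, and C(A') − C(A) = Δ, then ‖Z(T; A') − Z(T; A)‖₂ ≤ T‖Δ‖₂ · e^{T‖I−C(A)‖₂} · e^{T‖Δ‖₂} · ‖Z₀‖₂. -/

import Mathlib

/-!
Write `X = -T (I - C(A))` and `E = T Δ`, so that the perturbed diffusion is `exp (X + E) Z₀`.
Expanding `(X + E)ᵏ - Xᵏ` and bounding each of its noncommutative monomials termwise gives
`‖(X + E)ᵏ - Xᵏ‖ ≤ (‖X‖ + ‖E‖)ᵏ - ‖X‖ᵏ`; summing the exponential series then yields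
`‖exp (X + E) - exp X‖ ≤ e^{‖X‖ + ‖E‖} - e^{‖X‖} ≤ ‖E‖ e^{‖X‖ + ‖E‖}`, the last step by convexity
of the real exponential.
-/

open NormedSpace
open scoped Matrix.Norms.L2Operator

theorem norm_add_pow_sub_pow_le {𝔸 : Type*} [NormedRing 𝔸] (a b : 𝔸) :
    ∀ k : ℕ, ‖(a + b) ^ k - a ^ k‖ ≤ (‖a‖ + ‖b‖) ^ k - ‖a‖ ^ k
  | 0 => by simp
  | 1 => by simp
  | k + 2 => by
    have hsplit : (a + b) ^ (k + 2) - a ^ (k + 2) =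
        ((a + b) ^ (k + 1) - a ^ (k + 1)) * (a + b) + a ^ (k + 1) * b := by
      rw [pow_succ _ (k + 1), pow_succ _ (k + 1)]; noncomm_ring
    have ih := norm_add_pow_sub_pow_le a b (k + 1)
    calc ‖(a + b) ^ (k + 2) - a ^ (k + 2)‖
        ≤ ‖(a + b) ^ (k + 1) - a ^ (k + 1)‖ * ‖a + b‖ + ‖a ^ (k + 1)‖ * ‖b‖ := by
          rw [hsplit]
          exact (norm_add_le _ _).trans (add_le_add (norm_mul_le _ _) (norm_mul_le _ _))
      _ ≤ ((‖a‖ + ‖b‖) ^ (k + 1) - ‖a‖ ^ (k + 1)) * (‖a‖ + ‖b‖) + ‖a‖ ^ (k + 1) * ‖b‖ := by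
          gcongr
          · exact (norm_nonneg _).trans ih
          · exact norm_add_le a b
          · exact norm_pow_le' a k.succ_pos
      _ = (‖a‖ + ‖b‖) ^ (k + 2) - ‖a‖ ^ (k + 2) := by ring

theorem Real.exp_add_sub_exp_le (x y : ℝ) :
    Real.exp (x + y) - Real.exp x ≤ y * Real.exp (x + y) := by
  have h := mul_le_mul_of_nonneg_left (Real.one_sub_le_exp_neg y) (Real.exp_pos (x + y)).le
  rw [← Real.exp_add, add_neg_cancel_right] at h
  linarith

theorem norm_exp_add_sub_exp_le {𝔸 : Type*} [NormedRing 𝔸] [NormedAlgebra ℝ 𝔸]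
    [CompleteSpace 𝔸] (a b : 𝔸) :
    ‖exp (a + b) - exp a‖ ≤ Real.exp (‖a‖ + ‖b‖) - Real.exp ‖a‖ := by
  have hsum := (exp_series_hasSum_exp' (𝕂 := ℝ) (a + b)).sub (exp_series_hasSum_exp' (𝕂 := ℝ) a)
  have hmajorant := (exp_series_hasSum_exp' (𝕂 := ℝ) (‖a‖ + ‖b‖)).sub
    (exp_series_hasSum_exp' (𝕂 := ℝ) ‖a‖)
  rw [← Real.exp_eq_exp_ℝ] at hmajorant
  refine hsum.norm_le_of_bounded hmajorant fun k => ?_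
  rw [← smul_sub, ← smul_sub, norm_smul, Real.norm_of_nonneg (by positivity), smul_eq_mul]
  exact mul_le_mul_of_nonneg_left (norm_add_pow_sub_pow_le a b k) (by positivity)

theorem norm_exp_add_sub_exp_le_mul {𝔸 : Type*} [NormedRing 𝔸] [NormedAlgebra ℝ 𝔸]
    [CompleteSpace 𝔸] (a b : 𝔸) :
    ‖exp (a + b) - exp a‖ ≤ ‖b‖ * Real.exp (‖a‖ + ‖b‖) :=
  (norm_exp_add_sub_exp_le a b).trans (Real.exp_add_sub_exp_le _ _)

/-- Sensitivity of local graph diffusion `Z(T; A) = e^{−(I−C(A))T} Z₀` to topology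
perturbations: with `Δ = C(A') − C(A)`,
`‖Z(T; A') − Z(T; A)‖₂ ≤ T‖Δ‖₂ e^{T‖I−C(A)‖₂} e^{T‖Δ‖₂} ‖Z₀‖₂`. -/
theorem local_diffusion_topology_sensitivity
    {n d : ℕ} (CA CA' : Matrix (Fin n) (Fin n) ℝ)
    (Δ : Matrix (Fin n) (Fin n) ℝ) (hΔ : Δ = CA' - CA)
    (Z₀ : Matrix (Fin n) (Fin d) ℝ) (T : ℝ) (hT : 0 ≤ T) :
    ‖exp (-(T • (1 - CA'))) * Z₀ - exp (-(T • (1 - CA))) * Z₀‖ ≤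
      T * ‖Δ‖ * Real.exp (T * ‖1 - CA‖) * Real.exp (T * ‖Δ‖) * ‖Z₀‖ := by
  have hgenerator : -(T • (1 - CA')) = -(T • (1 - CA)) + T • Δ := by
    rw [hΔ, smul_sub, smul_sub, smul_sub]; abel
  have hnormX : ‖-(T • (1 - CA))‖ = T * ‖1 - CA‖ := by
    rw [norm_neg, norm_smul, Real.norm_of_nonneg hT]
  have hnormE : ‖T • Δ‖ = T * ‖Δ‖ := by rw [norm_smul, Real.norm_of_nonneg hT]
  calc ‖exp (-(T • (1 - CA'))) * Z₀ - exp (-(T • (1 - CA))) * Z₀‖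
      = ‖(exp (-(T • (1 - CA)) + T • Δ) - exp (-(T • (1 - CA)))) * Z₀‖ := by
        rw [hgenerator, Matrix.sub_mul]
    _ ≤ ‖exp (-(T • (1 - CA)) + T • Δ) - exp (-(T • (1 - CA)))‖ * ‖Z₀‖ :=
        Matrix.l2_opNorm_mul _ _
    _ ≤ T * ‖Δ‖ * Real.exp (T * ‖1 - CA‖ + T * ‖Δ‖) * ‖Z₀‖ := by
        grw [norm_exp_add_sub_exp_le_mul, hnormX, hnormE]
    _ = T * ‖Δ‖ * Real.exp (T * ‖1 - CA‖) * Real.exp (T * ‖Δ‖) * ‖Z₀‖ := by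
        rw [Real.exp_add]; ring
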